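/- arXiv:1311.7666 — 2 statements merged into one kernel-verified Lean document; each statement's English description precedes it below -/
import Mathlib

section
/- Let S be a K-algebra with a pseudo-degree function χ, and let a ∈ S be such that C_S(a) satisfies condition D(ℓ) for some ℓ > 0 and χ(a) > 0. Then for every b ∈ C_S(a) there exists a nonzero polynomial P(s,t) ∈ K[s,t] in two commuting variables such that P(a,b) = 0; i.e., a and b are algebraically dependent over K. -/
open Polynomial

/-- A pseudo-degree function on a ring `S`: a valuation-like map
`χ : S → ℤ ∪ {-∞}` with `χ a = -∞ ↔ a = 0`, `χ (ab) = χ a + χ b` and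
`χ (a+b) ≤ max (χ a) (χ b)`. -/
structure IsPseudoDegree {S : Type*} [Ring S] (χ : S → WithBot ℤ) : Prop where
  eq_bot_iff : ∀ a : S, χ a = ⊥ ↔ a = 0
  map_mul : ∀ a b : S, χ (a * b) = χ a + χ b
  add_le : ∀ a b : S, χ (a + b) ≤ max (χ a) (χ b)

/-- Condition `D(ℓ)` for a subalgebra `B` of `S`: every nonzero element of `B`
has `χ`-value `≥ 0`, and any `ℓ+1` elements of `B` all mapped to the same
integer by `χ` admit a nontrivial `K`-linear combination of strictly smaller
`χ`-value. -/
def CondD {K S : Type*} [Field K] [Ring S] [Algebra K S] (χ : S → WithBot ℤ)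
    (B : Subalgebra K S) (ℓ : ℕ) : Prop :=
  (∀ b ∈ B, b ≠ 0 → 0 ≤ χ b) ∧
  ∀ b : Fin (ℓ + 1) → S, (∀ i, b i ∈ B) → (∀ i, χ (b i) = χ (b 0)) → χ (b 0) ≠ ⊥ →
    ∃ α : Fin (ℓ + 1) → K, α ≠ 0 ∧ χ (∑ i, α i • b i) < χ (b 0)

/-!
Write `F n = {x ∈ C_S(a) | χ x ≤ n}`. Condition `D(ℓ)` forces `dim F n / F (n - 1) ≤ ℓ`, and
`F (-1) = 0`, so `dim F n ≤ ℓ (n + 1)` grows linearly in `n`.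
On the other hand, with `χ a ≤ d` and `χ b ≤ e`, the `(m + 1)²` monomials `aⁱ bʲ` with
`i, j ≤ m` all lie in `F (m (d + e))`. For `m = ℓ (d + e + 1)` there are more of them than this
dimension, and a linear dependence among them is a nonzero `P` with `P(a, b) = 0`.
-/

theorem WithBot.le_coe_sub_one_iff_lt {t : WithBot ℤ} {n : ℤ} :
    t ≤ ((n - 1 : ℤ) : WithBot ℤ) ↔ t < n := by
  induction t using WithBot.recBotCoe <;> simp

theorem WithBot.exists_le_natCast (t : WithBot ℤ) : ∃ d : ℕ, t ≤ (d : ℤ) := by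
  induction t using WithBot.recBotCoe with
  | bot => exact ⟨0, bot_le⟩
  | coe z => exact ⟨z.toNat, WithBot.coe_le_coe.mpr z.self_le_toNat⟩

theorem Submodule.rank_quotient_le_of_forall_exists_sum_smul_mem {K M : Type*} [DivisionRing K]
    [AddCommGroup M] [Module K M] (N : Submodule K M) {ℓ : ℕ}
    (h : ∀ x : Fin (ℓ + 1) → M, ∃ α : Fin (ℓ + 1) → K, α ≠ 0 ∧ ∑ i, α i • x i ∈ N) :
    Module.rank K (M ⧸ N) ≤ ℓ := by
  by_contra! hlt
  obtain ⟨y, hy⟩ := exists_linearIndependent_of_le_rank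
    (by simpa [Cardinal.succ_natCast] using Order.succ_le_of_lt hlt :
      ((ℓ + 1 : ℕ) : Cardinal) ≤ Module.rank K (M ⧸ N))
  choose x hx using fun i => N.mkQ_surjective (y i)
  obtain ⟨α, hα, hmem⟩ := h x
  refine hα (funext (Fintype.linearIndependent_iff.mp hy α ?_))
  calc ∑ i, α i • y i = N.mkQ (∑ i, α i • x i) := by simp only [map_sum, map_smul, hx]
    _ = 0 := (Submodule.Quotient.mk_eq_zero N).mpr hmem

theorem Submodule.not_linearIndependent_of_rank_lt {K M ι : Type*} [DivisionRing K]
    [AddCommGroup M] [Module K M] [Fintype ι] {v : ι → M} (W : Submodule K M)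
    (hv : ∀ i, v i ∈ W) (h : Module.rank K W < Fintype.card ι) : ¬ LinearIndependent K v := by
  intro hli
  have hW : LinearIndependent K (fun i => (⟨v i, hv i⟩ : W)) :=
    LinearIndependent.of_comp W.subtype hli
  exact lt_irrefl _ (h.trans_le (by simpa using hW.cardinal_lift_le_rank))

namespace IsPseudoDegree

variable {S : Type*} [Ring S] {χ : S → WithBot ℤ}

theorem map_zero (hχ : IsPseudoDegree χ) : χ 0 = ⊥ := (hχ.eq_bot_iff 0).mpr rfl

-- Only `≤`: in the zero ring `χ 1 = ⊥`.
theorem map_one_le (hχ : IsPseudoDegree χ) : χ 1 ≤ 0 := by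
  have h := hχ.map_mul 1 1
  rw [mul_one] at h
  induction h' : χ 1 using WithBot.recBotCoe with
  | bot => exact bot_le
  | coe z =>
    rw [h', ← WithBot.coe_add, WithBot.coe_inj] at h
    exact WithBot.coe_le_coe.mpr (by omega)

theorem map_pow_le (hχ : IsPseudoDegree χ) {x : S} {d : ℤ} (hx : χ x ≤ d) (n : ℕ) :
    χ (x ^ n) ≤ ((n * d : ℤ) : WithBot ℤ) := by
  induction n with
  | zero => simpa using hχ.map_one_le
  | succ n ih =>
    rw [pow_succ, hχ.map_mul]
    calc χ (x ^ n) + χ x ≤ ((n * d : ℤ) : WithBot ℤ) + (d : WithBot ℤ) := add_le_add ih hx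
      _ = (((n + 1 : ℕ) * d : ℤ) : WithBot ℤ) := by rw [← WithBot.coe_add]; congr 1; push_cast; ring

variable {K : Type*} [Field K] [Algebra K S] {B : Subalgebra K S}

theorem map_algebraMap_le (hχ : IsPseudoDegree χ) (hB : ∀ b ∈ B, b ≠ 0 → 0 ≤ χ b) (c : K) :
    χ (algebraMap K S c) ≤ 0 := by
  by_cases hc : algebraMap K S c = 0
  · rw [hc, hχ.map_zero]; exact bot_le
  have hc0 : c ≠ 0 := by rintro rfl; exact hc (algebraMap K S).map_zero
  have hunit : algebraMap K S c * algebraMap K S c⁻¹ = 1 := by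
    rw [← _root_.map_mul, mul_inv_cancel₀ hc0, _root_.map_one]
  have hinv : algebraMap K S c⁻¹ ≠ 0 := by
    intro h
    rw [h, mul_zero] at hunit
    exact hc (by simpa using congrArg (algebraMap K S c * ·) hunit.symm)
  calc χ (algebraMap K S c)
      ≤ χ (algebraMap K S c) + χ (algebraMap K S c⁻¹) :=
        le_add_of_nonneg_right (hB _ (B.algebraMap_mem _) hinv)
    _ = χ 1 := by rw [← hχ.map_mul, hunit]
    _ ≤ 0 := hχ.map_one_le

theorem map_smul_le (hχ : IsPseudoDegree χ) (hB : ∀ b ∈ B, b ≠ 0 → 0 ≤ χ b) (c : K) (x : S) :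
    χ (c • x) ≤ χ x := by
  rw [Algebra.smul_def, hχ.map_mul]
  exact add_le_of_nonpos_left (hχ.map_algebraMap_le hB c)

variable (hχ : IsPseudoDegree χ) (hB : ∀ b ∈ B, b ≠ 0 → 0 ≤ χ b)

def filtration (n : ℤ) : Submodule K S where
  carrier := {x | x ∈ B ∧ χ x ≤ n}
  zero_mem' := ⟨B.zero_mem, by rw [hχ.map_zero]; exact bot_le⟩
  add_mem' hx hy := ⟨B.add_mem hx.1 hy.1, (hχ.add_le _ _).trans (max_le hx.2 hy.2)⟩
  smul_mem' c _ hx := ⟨B.smul_mem hx.1 c, (hχ.map_smul_le hB c _).trans hx.2⟩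

theorem filtration_mono : Monotone (hχ.filtration hB) :=
  fun _ _ hmn _ hx => ⟨hx.1, hx.2.trans (WithBot.coe_le_coe.mpr hmn)⟩

theorem filtration_eq_bot_of_neg {n : ℤ} (hn : n < 0) : hχ.filtration hB n = ⊥ := by
  refine (Submodule.eq_bot_iff _).mpr fun x hx => ?_
  by_contra hx0
  have : (0 : WithBot ℤ) ≤ n := (hB x hx.1 hx0).trans hx.2
  exact absurd (WithBot.coe_le_coe.mp this) (not_le.mpr hn)

theorem pow_mul_pow_mem_filtration {x y : S} (hx : x ∈ B) (hy : y ∈ B) {d e : ℤ}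
    (hxd : χ x ≤ d) (hye : χ y ≤ e) (i j : ℕ) :
    x ^ i * y ^ j ∈ hχ.filtration hB (i * d + j * e) := by
  refine ⟨B.mul_mem (B.pow_mem hx i) (B.pow_mem hy j), ?_⟩
  rw [hχ.map_mul, WithBot.coe_add]
  exact add_le_add (hχ.map_pow_le hxd i) (hχ.map_pow_le hye j)

end IsPseudoDegree

namespace CondD

variable {K S : Type*} [Field K] [Ring S] [Algebra K S] {χ : S → WithBot ℤ} {B : Subalgebra K S}
  {ℓ : ℕ} (hχ : IsPseudoDegree χ) (hD : CondD χ B ℓ)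

theorem exists_sum_smul_mem_filtration_sub_one {n : ℤ} (x : Fin (ℓ + 1) → hχ.filtration hD.1 n) :
    ∃ α : Fin (ℓ + 1) → K, α ≠ 0 ∧ ∑ i, α i • (x i : S) ∈ hχ.filtration hD.1 (n - 1) := by
  by_cases hlow : ∃ k, (x k : S) ∈ hχ.filtration hD.1 (n - 1)
  · obtain ⟨k, hk⟩ := hlow
    refine ⟨Pi.single k 1, by simp, ?_⟩
    simpa [Pi.single_apply, ite_smul] using hk
  push Not at hlow
  have hval : ∀ k, χ (x k) = n := fun k =>
    eq_of_le_of_not_lt (x k).2.2 fun hlt =>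
      hlow k ⟨(x k).2.1, WithBot.le_coe_sub_one_iff_lt.mpr hlt⟩
  obtain ⟨α, hα, hlt⟩ := hD.2 (fun k => x k) (fun k => (x k).2.1) (fun k => by rw [hval, hval])
    (by rw [hval]; exact WithBot.coe_ne_bot)
  refine ⟨α, hα, B.sum_mem fun k _ => B.smul_mem (x k).2.1 _, ?_⟩
  rw [hval] at hlt
  exact WithBot.le_coe_sub_one_iff_lt.mpr hlt

theorem rank_filtration_le_rank_filtration_sub_one_add (n : ℤ) :
    Module.rank K (hχ.filtration hD.1 n) ≤ Module.rank K (hχ.filtration hD.1 (n - 1)) + ℓ := by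
  set U := (hχ.filtration hD.1 (n - 1)).comap (hχ.filtration hD.1 n).subtype
  have hU : Module.rank K U = Module.rank K (hχ.filtration hD.1 (n - 1)) :=
    (Submodule.comapSubtypeEquivOfLe (hχ.filtration_mono hD.1 (by omega))).rank_eq
  have hQ : Module.rank K (hχ.filtration hD.1 n ⧸ U) ≤ ℓ :=
    U.rank_quotient_le_of_forall_exists_sum_smul_mem fun x => by
      simpa [U] using hD.exists_sum_smul_mem_filtration_sub_one hχ x
  rw [← U.rank_quotient_add_rank, hU, add_comm]
  gcongr

theorem rank_filtration_le (n : ℕ) : Module.rank K (hχ.filtration hD.1 n) ≤ (ℓ * (n + 1) : ℕ) := by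
  induction n with
  | zero =>
    have h := hD.rank_filtration_le_rank_filtration_sub_one_add hχ 0
    rw [hχ.filtration_eq_bot_of_neg hD.1 (n := 0 - 1) (by omega), rank_bot, zero_add] at h
    simpa using h
  | succ n ih =>
    calc Module.rank K (hχ.filtration hD.1 (n + 1 : ℕ))
        ≤ Module.rank K (hχ.filtration hD.1 n) + ℓ := by
          have h := hD.rank_filtration_le_rank_filtration_sub_one_add hχ (n + 1)
          rwa [add_sub_cancel_right, ← Nat.cast_succ] at h
      _ ≤ (ℓ * (n + 1) : ℕ) + ℓ := by gcongr
      _ = (ℓ * (n + 1 + 1) : ℕ) := by push_cast; ring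

end CondD

theorem exists_ne_zero_eval₂_eq_zero_of_not_linearIndependent {K S : Type*} [Field K] [Ring S]
    [Algebra K S] {x y : S} {m : ℕ}
    (h : ¬ LinearIndependent K fun p : Fin m × Fin m => x ^ (p.1 : ℕ) * y ^ (p.2 : ℕ)) :
    ∃ P : K[X][X], P ≠ 0 ∧ eval₂ (aeval x).toRingHom y P = 0 := by
  obtain ⟨g, hg, p₀, hp₀⟩ := Fintype.not_linearIndependent_iff.mp h
  set P : K[X][X] := ∑ p : Fin m × Fin m, monomial p.2 (monomial p.1 (g p))
  refine ⟨P, fun hP => hp₀ ?_, ?_⟩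
  · have hcoeff : (P.coeff p₀.2).coeff p₀.1 = g p₀ := by
      simp [P, finsetSum_coeff, coeff_monomial, Fin.val_inj, Fintype.sum_prod_type]
    rw [← hcoeff, hP, coeff_zero, coeff_zero]
  · simpa [P, eval₂_finsetSum, aeval_monomial, mul_assoc, Algebra.smul_def] using hg

theorem stmt6_general {K S : Type*} [Field K] [Ring S] [Algebra K S]
    (χ : S → WithBot ℤ) (hχ : IsPseudoDegree χ)
    (a : S) (ℓ : ℕ)
    (hD : CondD χ (Subalgebra.centralizer K {a}) ℓ)
    (b : S) (hb : b ∈ Subalgebra.centralizer K {a}) :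
    ∃ P : Polynomial (Polynomial K), P ≠ 0 ∧
      Polynomial.eval₂ (Polynomial.aeval a).toRingHom b P = 0 := by
  have haB : a ∈ Subalgebra.centralizer K {a} := by simp [Subalgebra.mem_centralizer_iff]
  obtain ⟨d, hd⟩ := (χ a).exists_le_natCast
  obtain ⟨e, he⟩ := (χ b).exists_le_natCast
  set m := ℓ * (d + e + 1)
  set N := m * (d + e)
  apply exists_ne_zero_eval₂_eq_zero_of_not_linearIndependent (m := m + 1)
  refine (hχ.filtration hD.1 N).not_linearIndependent_of_rank_lt (fun p => ?_) ?_
  · refine hχ.filtration_mono hD.1 ?_ (hχ.pow_mul_pow_mem_filtration hD.1 haB hb hd he p.1 p.2)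
    have hi : (p.1 : ℕ) ≤ m := Nat.lt_succ_iff.mp p.1.2
    have hj : (p.2 : ℕ) ≤ m := Nat.lt_succ_iff.mp p.2.2
    push_cast [N]
    nlinarith
  · calc Module.rank K (hχ.filtration hD.1 N) ≤ (ℓ * (N + 1) : ℕ) := hD.rank_filtration_le hχ N
      _ < Fintype.card (Fin (m + 1) × Fin (m + 1)) := by
        have hm : ℓ ≤ m := Nat.le_mul_of_pos_right ℓ (by omega)
        have hmm : m * m = ℓ * N + ℓ * m := by simp only [m, N]; ring
        simp only [Fintype.card_prod, Fintype.card_fin, Nat.cast_lt]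
        nlinarith

theorem stmt6 {K S : Type*} [Field K] [Ring S] [Algebra K S]
    (χ : S → WithBot ℤ) (hχ : IsPseudoDegree χ)
    (a : S) (ha : 0 < χ a) (ℓ : ℕ) (hℓ : 0 < ℓ)
    (hD : CondD χ (Subalgebra.centralizer K {a}) ℓ)
    (b : S) (hb : b ∈ Subalgebra.centralizer K {a}) :
    ∃ P : Polynomial (Polynomial K), P ≠ 0 ∧
      Polynomial.eval₂ (Polynomial.aeval a).toRingHom b P = 0 :=
  stmt6_general χ hχ a ℓ hD b hb
end

section
/- Let K be a field, R = K[y], σ an endomorphism of R, δ a σ-derivation, S = R[x; σ, δ]. If a ∈ K[y] \ K, and σ(y) has degree > 1 in y, then C_S(a) = K[y]. -/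
open Polynomial

/-- Data exhibiting a ring `S` as the Ore extension `R[x; σ, δ]` of `R = K[y]`:
there is an embedding `ι : K[y] →+* S`, an element `x : S` with
`x · ι r = ι (σ r) · x + ι (δ r)`, `δ` is a `σ`-derivation, and every element
of `S` is uniquely a sum `Σᵢ ι aᵢ · xⁱ`; the unique representation is recorded
by the additive equivalence `rep : S ≃+ (K[y])[x]`. -/
structure OreExt (K : Type*) [Field K] (S : Type*) [Ring S]
    (σ : Polynomial K →+* Polynomial K) (δ : Polynomial K → Polynomial K) where
  ι : Polynomial K →+* S
  x : S
  rep : S ≃+ Polynomial (Polynomial K)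
  rep_symm_apply : ∀ p : Polynomial (Polynomial K),
    rep.symm p = p.sum fun i a => ι a * x ^ i
  comm_rule : ∀ r : Polynomial K, x * ι r = ι (σ r) * x + ι (δ r)
  delta_add : ∀ f g : Polynomial K, δ (f + g) = δ f + δ g
  delta_leibniz : ∀ f g : Polynomial K, δ (f * g) = σ f * δ g + δ f * g

/-!
Write `b = Σ ι(bᵢ) xⁱ` with leading term `ι(bₙ) xⁿ`. Since `xⁿ ι(p) = ι(σⁿ p) xⁿ + (lower terms)`,
comparing the `xⁿ`-coefficients of `b ι(p) = ι(p) b` gives `bₙ σⁿ(p) = p bₙ`, hence `σⁿ p = p`.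
Every ring endomorphism of `K[y]` is `q ↦ q^f (σ y)` for a field endomorphism `f` of `K`, so
`deg σⁿ(p) = sⁿ deg p`, which forces `n = 0`.
-/

namespace Polynomial

variable {K : Type*} [Field K]

theorem exists_ringHom_apply_eq_comp_map (σ : K[X] →+* K[X]) :
    ∃ f : K →+* K, ∀ q : K[X], σ q = (q.map f).comp (σ X) := by
  have hC : ∀ c : K, σ (C c) = C ((σ (C c)).coeff 0) := fun c ↦ by
    refine eq_C_of_natDegree_eq_zero ?_
    rcases eq_or_ne c 0 with rfl | hc
    · simp
    · exact natDegree_eq_zero_of_isUnit ((isUnit_C.mpr hc.isUnit).map σ)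
  refine ⟨constantCoeff.comp (σ.comp C), fun q ↦ ?_⟩
  suffices σ = (compRingHom (σ X)).comp (mapRingHom (constantCoeff.comp (σ.comp C))) from
    DFunLike.congr_fun this q
  refine ringHom_ext (fun c ↦ ?_) (by simp)
  simpa using hC c

theorem natDegree_ringHom_apply (σ : K[X] →+* K[X]) (q : K[X]) :
    (σ q).natDegree = q.natDegree * (σ X).natDegree := by
  obtain ⟨f, hf⟩ := exists_ringHom_apply_eq_comp_map σ
  rw [hf, natDegree_comp, natDegree_map_eq_of_injective f.injective]

theorem natDegree_iterate_ringHom_apply (σ : K[X] →+* K[X]) (q : K[X]) (n : ℕ) :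
    (σ^[n] q).natDegree = (σ X).natDegree ^ n * q.natDegree := by
  induction n with
  | zero => simp
  | succ n ih => rw [Function.iterate_succ_apply', natDegree_ringHom_apply, ih, pow_succ]; ring

theorem eq_zero_of_iterate_ringHom_apply_eq {σ : K[X] →+* K[X]} (hσ : 1 < (σ X).natDegree)
    {p : K[X]} (hp : 0 < p.natDegree) {n : ℕ} (h : σ^[n] p = p) : n = 0 := by
  have hdeg := natDegree_iterate_ringHom_apply σ p n
  rw [h, eq_comm, mul_eq_right₀ hp.ne', Nat.pow_eq_one] at hdeg
  exact hdeg.resolve_left hσ.ne'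

end Polynomial

namespace OreExt

variable {K S : Type*} [Field K] [Ring S] {σ : K[X] →+* K[X]} {δ : K[X] → K[X]}

theorem delta_zero (O : OreExt K S σ δ) : δ 0 = 0 := by
  simpa using (O.delta_add 0 0).symm

theorem rep_ι_mul_x_pow (O : OreExt K S σ δ) (a : K[X]) (i : ℕ) :
    O.rep (O.ι a * O.x ^ i) = monomial i a := by
  rw [← O.rep.eq_symm_apply, O.rep_symm_apply, sum_monomial_index _ _ (by simp)]

theorem rep_ι (O : OreExt K S σ δ) (a : K[X]) : O.rep (O.ι a) = C a := by
  simpa using O.rep_ι_mul_x_pow a 0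

theorem rep_ι_mul (O : OreExt K S σ δ) (a : K[X]) (s : S) :
    O.rep (O.ι a * s) = C a * O.rep s := by
  obtain ⟨q, rfl⟩ := O.rep.symm.surjective s
  rw [O.rep.apply_symm_apply]
  induction q using Polynomial.induction_on' with
  | add q r hq hr => rw [map_add, mul_add, map_add, hq, hr, mul_add]
  | monomial i b =>
    rw [O.rep_symm_apply, sum_monomial_index _ _ (by simp), ← mul_assoc, ← map_mul,
      rep_ι_mul_x_pow, C_mul_monomial]

theorem coeff_rep_x_mul (O : OreExt K S σ δ) (s : S) (j : ℕ) :
    (O.rep (O.x * s)).coeff j = (X * (O.rep s).map σ).coeff j + δ ((O.rep s).coeff j) := by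
  obtain ⟨q, rfl⟩ := O.rep.symm.surjective s
  rw [O.rep.apply_symm_apply]
  induction q using Polynomial.induction_on' with
  | add q r hq hr =>
    rw [map_add, mul_add, map_add, coeff_add, hq, hr]
    simp only [Polynomial.map_add, mul_add, coeff_add, O.delta_add]
    abel
  | monomial i a =>
    rw [O.rep_symm_apply, sum_monomial_index _ _ (by simp), ← mul_assoc, O.comm_rule, add_mul,
      mul_assoc, ← pow_succ', map_add, rep_ι_mul_x_pow, rep_ι_mul_x_pow, map_monomial,
      X_mul_monomial]
    simp only [coeff_add, coeff_monomial]
    split_ifs <;> simp [O.delta_zero]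

theorem rep_x_mul_of_natDegree_le (O : OreExt K S σ δ) {s : S} {n : ℕ}
    (hs : (O.rep s).natDegree ≤ n) :
    (O.rep (O.x * s)).natDegree ≤ n + 1 ∧
      (O.rep (O.x * s)).coeff (n + 1) = σ ((O.rep s).coeff n) := by
  have hzero : ∀ j, n < j → (O.rep s).coeff j = 0 := natDegree_le_iff_coeff_eq_zero.mp hs
  refine ⟨natDegree_le_iff_coeff_eq_zero.mpr fun j hj ↦ ?_, ?_⟩
  · obtain ⟨j, rfl⟩ := Nat.exists_eq_add_of_lt (Nat.zero_lt_of_lt hj)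
    rw [coeff_rep_x_mul, zero_add, coeff_X_mul, coeff_map, hzero j (by omega),
      hzero (j + 1) (by omega), map_zero, O.delta_zero, add_zero]
  · rw [coeff_rep_x_mul, coeff_X_mul, coeff_map, hzero (n + 1) (by omega), O.delta_zero, add_zero]

theorem rep_x_pow_mul_ι (O : OreExt K S σ δ) (p : K[X]) (i : ℕ) :
    (O.rep (O.x ^ i * O.ι p)).natDegree ≤ i ∧ (O.rep (O.x ^ i * O.ι p)).coeff i = σ^[i] p := by
  induction i with
  | zero => simp [rep_ι]
  | succ i ih =>
    rw [pow_succ', mul_assoc, Function.iterate_succ_apply', ← ih.2]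
    exact O.rep_x_mul_of_natDegree_le ih.1

theorem coeff_rep_mul_ι_natDegree (O : OreExt K S σ δ) (b : S) (p : K[X]) :
    (O.rep (b * O.ι p)).coeff (O.rep b).natDegree =
      (O.rep b).leadingCoeff * σ^[(O.rep b).natDegree] p := by
  set q := O.rep b
  have hb : b = ∑ i ∈ q.support, O.ι (q.coeff i) * O.x ^ i := by
    rw [← O.rep.symm_apply_apply b, O.rep_symm_apply, sum_def]
  rw [hb, Finset.sum_mul, map_sum, finsetSum_coeff, leadingCoeff]
  simp_rw [mul_assoc, rep_ι_mul, coeff_C_mul]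
  rw [Finset.sum_eq_single q.natDegree (fun i hi hin ↦ ?_)
    (fun hn ↦ by rw [notMem_support_iff.mp hn, zero_mul]), (O.rep_x_pow_mul_ι p _).2]
  have hlt : i < q.natDegree := (le_natDegree_of_mem_supp i hi).lt_of_ne hin
  rw [coeff_eq_zero_of_natDegree_lt ((O.rep_x_pow_mul_ι p i).1.trans_lt hlt), mul_zero]

theorem eq_ι_coeff_zero_of_natDegree_rep_eq_zero (O : OreExt K S σ δ) {b : S}
    (hb : (O.rep b).natDegree = 0) : b = O.ι ((O.rep b).coeff 0) :=
  O.rep.injective (by rw [rep_ι, ← eq_C_of_natDegree_eq_zero hb])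

end OreExt

theorem stmt17 {K S : Type*} [Field K] [Ring S]
    (σ : Polynomial K →+* Polynomial K) (δ : Polynomial K → Polynomial K)
    (O : OreExt K S σ δ)
    (hs : 1 < (σ Polynomial.X).natDegree)
    (p : Polynomial K) (hp : 0 < p.natDegree) :
    {b : S | b * O.ι p = O.ι p * b} = Set.range O.ι := by
  ext b
  refine ⟨fun (h : b * O.ι p = O.ι p * b) ↦ ?_, ?_⟩
  · set q := O.rep b
    have hlead : q.leadingCoeff * σ^[q.natDegree] p = q.leadingCoeff * p := by
      rw [← O.coeff_rep_mul_ι_natDegree, h, O.rep_ι_mul, coeff_C_mul, mul_comm]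
      rfl
    have hdeg : q.natDegree = 0 := by
      rcases eq_or_ne q 0 with hq | hq
      · rw [hq, natDegree_zero]
      · exact eq_zero_of_iterate_ringHom_apply_eq hs hp
          (mul_left_cancel₀ (leadingCoeff_ne_zero.mpr hq) hlead)
    exact ⟨_, (O.eq_ι_coeff_zero_of_natDegree_rep_eq_zero hdeg).symm⟩
  · rintro ⟨a, rfl⟩
    rw [Set.mem_ofPred_eq, ← map_mul, ← map_mul, mul_comm]
end
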